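/- If v ∈ RG is such that [I_n | σ(v)] generates a self-dual code over R, then v is a unit in RG with inverse −v^T. -/

import Mathlib

/-!
Self-orthogonality of the rows of `[I | A]` says `1 + A Aᵀ = 0`. For `A = σ(v)` this transfers
to `RG`, because `σ` is an injective ring homomorphism taking `vᵀ` to `σ(v)ᵀ`; and `Aᵀ A = -1`
follows as well, since a one-sided inverse of a square matrix over a commutative ring is
two-sided.
-/

/-- The matrix σ(v) of a group ring element, with (i,j) entry the coefficient of i⁻¹ * j. -/
noncomputable def sigmaMat {R G : Type*} [Semiring R] [Group G] (v : MonoidAlgebra R G) :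
    Matrix G G R := Matrix.of fun i j => v.coeff (i⁻¹ * j)

/-- The canonical involution on a group ring, sending Σ αᵢ gᵢ to Σ αᵢ gᵢ⁻¹. -/
noncomputable def transInvol {R G : Type*} [Semiring R] [Group G] (v : MonoidAlgebra R G) :
    MonoidAlgebra R G := MonoidAlgebra.ofCoeff (Finsupp.equivMapDomain (Equiv.inv G) v.coeff)
/-- The Euclidean dual of a linear code C ⊆ R^ι. -/
noncomputable def dualCode {R ι : Type*} [CommRing R] [Fintype ι] (C : Submodule R (ι → R)) :
    Submodule R (ι → R) where
  carrier := {x | ∀ c ∈ C, ∑ i, x i * c i = 0}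
  add_mem' := by
    intro a b ha hb c hc
    have h1 := ha c hc
    have h2 := hb c hc
    simp only [Pi.add_apply, add_mul, Finset.sum_add_distrib, h1, h2, add_zero]
  zero_mem' := by intro c hc; simp
  smul_mem' := by
    intro r x hx c hc
    have h := hx c hc
    simp only [Pi.smul_apply, smul_eq_mul, mul_assoc]
    rw [← Finset.mul_sum, h, mul_zero]

open scoped Matrix

theorem mul_transpose_eq_zero_of_span_le_dualCode {R ι κ : Type*} [CommRing R] [Fintype κ]
    (M : Matrix ι κ R)
    (h : Submodule.span R (Set.range M) ≤ dualCode (Submodule.span R (Set.range M))) :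
    M * Mᵀ = 0 := by
  ext i j
  have hrow (k : ι) : M k ∈ Submodule.span R (Set.range M) :=
    Submodule.subset_span (Set.mem_range_self k)
  exact h (hrow i) (M j) (hrow j)

theorem mul_transpose_eq_neg_one_of_span_fromCols_le_dualCode {R ι : Type*} [CommRing R]
    [Fintype ι] [DecidableEq ι] (A : Matrix ι ι R)
    (h : Submodule.span R (Set.range (Matrix.fromCols (1 : Matrix ι ι R) A))
      ≤ dualCode (Submodule.span R (Set.range (Matrix.fromCols (1 : Matrix ι ι R) A)))) :
    A * Aᵀ = -1 := by
  have h0 := mul_transpose_eq_zero_of_span_le_dualCode _ h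
  rw [Matrix.transpose_fromCols, Matrix.fromCols_mul_fromRows, Matrix.transpose_one,
    Matrix.one_mul] at h0
  exact eq_neg_of_add_eq_zero_right h0

section sigmaMat

variable {R G : Type*} [Group G]

theorem sigmaMat_apply [Semiring R] (v : MonoidAlgebra R G) (i j : G) :
    sigmaMat v i j = v.coeff (i⁻¹ * j) := rfl

theorem sigmaMat_injective [Semiring R] :
    Function.Injective (sigmaMat : MonoidAlgebra R G → Matrix G G R) := fun v w h =>
  MonoidAlgebra.coeff_injective <| Finsupp.ext fun g => by
    simpa [sigmaMat_apply] using congrFun (congrFun h 1) g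

theorem sigmaMat_one [Semiring R] [DecidableEq G] : sigmaMat (1 : MonoidAlgebra R G) = 1 := by
  ext i j
  simp [sigmaMat_apply, MonoidAlgebra.one_def, Matrix.one_apply, Finsupp.single_apply,
    inv_mul_eq_one, eq_comm]

theorem sigmaMat_neg [Ring R] (v : MonoidAlgebra R G) : sigmaMat (-v) = -sigmaMat v := rfl

theorem sigmaMat_transInvol [Semiring R] (v : MonoidAlgebra R G) :
    sigmaMat (transInvol v) = (sigmaMat v)ᵀ := by
  ext i j
  simp [sigmaMat_apply, transInvol]

theorem sigmaMat_mul [Semiring R] [Fintype G] (v w : MonoidAlgebra R G) :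
    sigmaMat (v * w) = sigmaMat v * sigmaMat w := by
  ext i j
  rw [sigmaMat_apply, MonoidAlgebra.coeff_mul_apply_left, Finsupp.sum_fintype _ _ (by simp),
    Matrix.mul_apply]
  refine Fintype.sum_equiv (Equiv.mulLeft i) _ _ fun a => ?_
  simp [sigmaMat_apply, mul_assoc]

end sigmaMat

theorem stmt_19_general (R G : Type*) [CommRing R] [Group G] [Fintype G] [DecidableEq G]
    (v : MonoidAlgebra R G)
    (hsd : Submodule.span R
        (Set.range fun i => Matrix.fromCols (1 : Matrix G G R) (sigmaMat v) i)
      = dualCode (Submodule.span R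
        (Set.range fun i => Matrix.fromCols (1 : Matrix G G R) (sigmaMat v) i))) :
    v * (-(transInvol v)) = 1 ∧ (-(transInvol v)) * v = 1 := by
  have hA : sigmaMat v * (sigmaMat v)ᵀ = -1 :=
    mul_transpose_eq_neg_one_of_span_fromCols_le_dualCode _ hsd.le
  have hA' : (sigmaMat v)ᵀ * sigmaMat v = -1 := by
    rw [← neg_eq_iff_eq_neg, ← neg_mul]
    exact mul_eq_one_comm.mp (by rw [mul_neg, hA, neg_neg])
  have hright : v * transInvol v = -1 := sigmaMat_injective <| by
    rw [sigmaMat_mul, sigmaMat_transInvol, hA, sigmaMat_neg, sigmaMat_one]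
  have hleft : transInvol v * v = -1 := sigmaMat_injective <| by
    rw [sigmaMat_mul, sigmaMat_transInvol, hA', sigmaMat_neg, sigmaMat_one]
  exact ⟨by rw [mul_neg, hright, neg_neg], by rw [neg_mul, hleft, neg_neg]⟩

/-- If [Iₙ | σ(v)] generates a self-dual code over a finite commutative Frobenius ring,
    then v is a unit in RG with inverse -vᵀ. -/
theorem stmt_19 (R G : Type*) [CommRing R] [Fintype R] [Group G] [Fintype G] [DecidableEq G]
    (hFrob : ∀ (ι : Type) [Fintype ι] (C : Submodule R (ι → R)),
      Nat.card C * Nat.card (dualCode C) = Nat.card R ^ Fintype.card ι)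
    (v : MonoidAlgebra R G)
    (hsd : Submodule.span R
        (Set.range fun i => Matrix.fromCols (1 : Matrix G G R) (sigmaMat v) i)
      = dualCode (Submodule.span R
        (Set.range fun i => Matrix.fromCols (1 : Matrix G G R) (sigmaMat v) i))) :
    v * (-(transInvol v)) = 1 ∧ (-(transInvol v)) * v = 1 :=
  stmt_19_general R G v hsd
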